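/- arXiv:2203.12494 — 4 statements merged into one kernel-verified Lean document; each statement's English description precedes it below -/
import Mathlib

section
/- Let G be a countable group acting continuously by homeomorphisms on the closed interval [0,1]. If the action is expansive (i.e., there exists c > 0 such that for all x ≠ y in [0,1] there is g ∈ G with |gx - gy| > c), then there exists a nonempty G-invariant open subset U of [0,1] such that the restricted action of G on U is topologically transitive (some point of U has dense orbit in U). -/
open Pointwise Set Topology

namespace ExpansiveAuxFJ

/-- In a finite digraph with a transitive edge relation in which every vertex has a
successor, there is a vertex `i0` lying on a cycle such that every vertex reachable
from `i0` can reach back to `i0`. -/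
lemma exists_terminal {n : ℕ} (hn : 0 < n) (Rel : Fin n → Fin n → Prop)
    (htrans : ∀ i j k, Rel i j → Rel j k → Rel i k)
    (hsucc : ∀ i, ∃ j, Rel i j) :
    ∃ i0, Rel i0 i0 ∧ ∀ j, Rel i0 j → Rel j i0 := by
  classical
  have L1 : ∀ j : Fin n, ∃ j', Rel j' j' ∧ ∀ x, Rel j' x → Rel j x := by
    intro j
    let seq : ℕ → Fin n := fun k => Nat.rec j (fun _ x => (hsucc x).choose) k
    have hstep : ∀ k, Rel (seq k) (seq (k + 1)) := fun k => (hsucc (seq k)).choose_spec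
    have hchain : ∀ t s : ℕ, s < t → Rel (seq s) (seq t) := by
      intro t
      induction t with
      | zero => intro s hs; omega
      | succ t ih =>
        intro s hs
        rcases Nat.lt_succ_iff_lt_or_eq.mp hs with h | h
        · exact htrans _ _ _ (ih s h) (hstep t)
        · subst h; exact hstep s
    obtain ⟨s, t, hne, heq⟩ := Finite.exists_ne_map_eq_of_infinite seq
    have key : ∀ s t : ℕ, s < t → seq s = seq t →
        ∃ j', Rel j' j' ∧ ∀ x, Rel j' x → Rel j x := by
      intro s t hst heq
      have hself : Rel (seq s) (seq s) := by
        have h := hchain t s hst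
        rw [← heq] at h
        exact h
      refine ⟨seq s, hself, ?_⟩
      intro x hx
      rcases Nat.eq_zero_or_pos s with rfl | hs
      · exact hx
      · exact htrans j (seq s) x (hchain s 0 hs) hx
    rcases hne.lt_or_gt with h | h
    · exact key s t h heq
    · exact key t s h heq.symm
  have hj0 : (⟨0, hn⟩ : Fin n) = ⟨0, hn⟩ := rfl
  let S : Fin n → Finset (Fin n) := fun i => Finset.univ.filter (fun x => Rel i x)
  let T : Finset (Fin n) := Finset.univ.filter (fun i => Rel i i)
  have hT : T.Nonempty := by
    obtain ⟨j', hj', -⟩ := L1 ⟨0, hn⟩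
    exact ⟨j', Finset.mem_filter.mpr ⟨Finset.mem_univ _, hj'⟩⟩
  obtain ⟨i0, hi0T, hmin⟩ := T.exists_min_image (fun i => (S i).card) hT
  have hi0 : Rel i0 i0 := (Finset.mem_filter.mp hi0T).2
  refine ⟨i0, hi0, ?_⟩
  intro j hj
  by_contra hji
  obtain ⟨j', hj'self, hj'sub⟩ := L1 j
  have hsub : S j' ⊆ S i0 := by
    intro x hx
    have hx' : Rel j' x := (Finset.mem_filter.mp hx).2
    exact Finset.mem_filter.mpr ⟨Finset.mem_univ _, htrans _ _ _ hj (hj'sub x hx')⟩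
  have hne' : i0 ∈ S i0 := Finset.mem_filter.mpr ⟨Finset.mem_univ _, hi0⟩
  have hni : i0 ∉ S j' := by
    intro hmem
    exact hji (hj'sub i0 (Finset.mem_filter.mp hmem).2)
  have hlt : (S j').card < (S i0).card :=
    Finset.card_lt_card ⟨hsub, fun hba => hni (hba hne')⟩
  have hge : (S i0).card ≤ (S j').card :=
    hmin j' (Finset.mem_filter.mpr ⟨Finset.mem_univ _, hj'self⟩)
  omega

/-- arithmetic: a subinterval of `[0,1]` of length `> 2/n` contains a full grid cell. -/
lemma exists_cell {n : ℕ} (hn : 0 < n) {m M : ℝ} (hm : 0 ≤ m)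
    (hgap : m + 2 / n < M) (hM : M ≤ 1) :
    ∃ k : ℕ, k + 1 ≤ n ∧ m ≤ (k : ℝ) / n ∧ ((k : ℝ) + 1) / n ≤ M := by
  have hn' : (0 : ℝ) < n := by exact_mod_cast hn
  have hceil : (⌈m * n⌉₊ : ℝ) < m * n + 1 := Nat.ceil_lt_add_one (by positivity)
  have hle : m * n ≤ (⌈m * n⌉₊ : ℝ) := Nat.le_ceil _
  have h2n : (2 : ℝ) / n * n = 2 := div_mul_cancel₀ _ (ne_of_gt hn')
  have hMn : m * n + 2 < M * n := by
    have := mul_lt_mul_of_pos_right hgap hn'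
    have hexp : (m + 2 / n) * n = m * n + 2 := by rw [add_mul, h2n]
    linarith [hexp ▸ this]
  have h2 : ((⌈m * n⌉₊ : ℝ) + 1) / n ≤ M := by
    rw [div_le_iff₀ hn']
    linarith
  refine ⟨⌈m * n⌉₊, ?_, ?_, h2⟩
  · have h3 : ((⌈m * n⌉₊ : ℝ) + 1) ≤ (n : ℝ) := by
      have := (div_le_iff₀ hn').mp h2
      have hMn1 : M * n ≤ n := by nlinarith
      linarith
    exact_mod_cast h3
  · rw [le_div_iff₀ hn']
    exact hle

/-- Key consequence of the intermediate value theorem: if `↑x` lies between the images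
of the endpoints of `[a,b] ⊆ I` under `g`, then `x ∈ g • [a,b]`. -/
lemma mem_smul_Icc {G : Type*} [Group G] [MulAction G unitInterval]
    [ContinuousConstSMul G unitInterval]
    (g : G) {a b x : unitInterval} (hab : a ≤ b)
    (h1 : min ((g • a : unitInterval) : ℝ) ((g • b : unitInterval) : ℝ) ≤ (x : ℝ))
    (h2 : (x : ℝ) ≤ max ((g • a : unitInterval) : ℝ) ((g • b : unitInterval) : ℝ)) :
    x ∈ g • Set.Icc a b := by
  set F : unitInterval → ℝ := fun t => ((g • t : unitInterval) : ℝ) with hF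
  have hFc : Continuous F := continuous_subtype_val.comp (continuous_const_smul g)
  have hpre : IsPreconnected (Set.Icc a b : Set unitInterval) := by
    apply Topology.IsInducing.subtypeVal.isPreconnected_image.mp
    have himg : (Subtype.val '' (Set.Icc a b) : Set ℝ) = Set.Icc (a : ℝ) (b : ℝ) := by
      ext r
      constructor
      · rintro ⟨y, hy, rfl⟩
        exact ⟨Subtype.coe_le_coe.mpr hy.1, Subtype.coe_le_coe.mpr hy.2⟩
      · intro hr
        have hr0 : (0 : ℝ) ≤ r := le_trans a.2.1 hr.1
        have hr1 : r ≤ 1 := le_trans hr.2 b.2.2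
        exact ⟨⟨r, hr0, hr1⟩, ⟨hr.1, hr.2⟩, rfl⟩
    rw [himg]
    exact isPreconnected_Icc
  have himg2 : IsPreconnected (F '' Set.Icc a b) := hpre.image F hFc.continuousOn
  have haI : F a ∈ F '' Set.Icc a b := ⟨a, ⟨le_refl _, hab⟩, rfl⟩
  have hbI : F b ∈ F '' Set.Icc a b := ⟨b, ⟨hab, le_refl _⟩, rfl⟩
  have hmem : (x : ℝ) ∈ F '' Set.Icc a b := by
    rcases le_total (F a) (F b) with h | h
    · exact himg2.Icc_subset haI hbI
        ⟨by rwa [min_eq_left h] at h1, by rwa [max_eq_right h] at h2⟩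
    · exact himg2.Icc_subset hbI haI
        ⟨by rwa [min_eq_right h] at h1, by rwa [max_eq_left h] at h2⟩
  obtain ⟨y, hy, hFy⟩ := hmem
  exact Set.mem_smul_set.mpr ⟨y, hy, Subtype.ext hFy⟩

end ExpansiveAuxFJ

open ExpansiveAuxFJ

/-- An expansive action of a countable group on [0,1] admits a nonempty invariant open set
on which the action is topologically transitive. -/
theorem expansive_action_has_transitive_open_set
    (G : Type*) [Group G] [Countable G] [MulAction G unitInterval]
    [ContinuousConstSMul G unitInterval]
    (hexp : ∃ c > 0, ∀ x y : unitInterval, x ≠ y → ∃ g : G, c < dist (g • x) (g • y)) :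
    ∃ U : Set unitInterval, U.Nonempty ∧ IsOpen U ∧
      (∀ (g : G), ∀ x ∈ U, g • x ∈ U) ∧
      ∃ x ∈ U, U ⊆ closure (MulAction.orbit G x) := by
  classical
  obtain ⟨c, hc, hexp⟩ := hexp
  set n : ℕ := ⌈2 / c⌉₊ + 1 with hn_def
  have hn : 0 < n := Nat.succ_pos _
  have hnR : (0 : ℝ) < n := by exact_mod_cast hn
  have hcn : 2 / (n : ℝ) < c := by
    rw [div_lt_iff₀ hnR]
    have h1 : 2 / c < (n : ℝ) := by
      calc 2 / c ≤ (⌈2 / c⌉₊ : ℝ) := Nat.le_ceil _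
        _ < n := by exact_mod_cast Nat.lt_succ_self _
    calc (2 : ℝ) = (2 / c) * c := by field_simp
      _ < n * c := mul_lt_mul_of_pos_right h1 hc
      _ = c * n := mul_comm _ _
  -- the grid cells
  set cell : Fin n → Set unitInterval :=
    fun k => {x | ((k : ℕ) : ℝ) / n ≤ (x : ℝ) ∧ (x : ℝ) ≤ (((k : ℕ) : ℝ) + 1) / n}
    with hcell_def
  have hk1n : ∀ k : Fin n, (((k : ℕ) : ℝ) + 1) / n ≤ 1 := by
    intro k
    rw [div_le_one hnR]
    exact_mod_cast Nat.succ_le_of_lt k.2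
  have hk0 : ∀ k : Fin n, (0 : ℝ) ≤ ((k : ℕ) : ℝ) / n := fun k => by positivity
  have hkk1 : ∀ k : Fin n, ((k : ℕ) : ℝ) / n < (((k : ℕ) : ℝ) + 1) / n := by
    intro k
    exact (div_lt_div_iff_of_pos_right hnR).mpr (by linarith)
  -- endpoints of the cells as elements of the unit interval
  set lo : Fin n → unitInterval := fun k => ⟨((k : ℕ) : ℝ) / n, hk0 k, (hkk1 k).le.trans (hk1n k)⟩
    with hlo_def
  set hi : Fin n → unitInterval := fun k => ⟨(((k : ℕ) : ℝ) + 1) / n, by positivity, hk1n k⟩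
    with hhi_def
  have hlohi : ∀ k, lo k < hi k := fun k => Subtype.mk_lt_mk.mpr (hkk1 k)
  have hcell_eq : ∀ k, cell k = Set.Icc (lo k) (hi k) := by
    intro k
    ext x
    simp only [hcell_def, Set.mem_Icc, Set.mem_setOf_eq]
    constructor
    · rintro ⟨h1, h2⟩
      exact ⟨Subtype.coe_le_coe.mp h1, Subtype.coe_le_coe.mp h2⟩
    · rintro ⟨h1, h2⟩
      exact ⟨Subtype.coe_le_coe.mpr h1, Subtype.coe_le_coe.mpr h2⟩
  -- the expansion property: every nondegenerate interval covers some cell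
  have EXP : ∀ a b : unitInterval, a < b → ∃ (g : G) (j : Fin n), cell j ⊆ g • Set.Icc a b := by
    intro a b hab
    obtain ⟨g, hg⟩ := hexp a b (ne_of_lt hab)
    set u : ℝ := ((g • a : unitInterval) : ℝ) with hu
    set v : ℝ := ((g • b : unitInterval) : ℝ) with hv
    have habs : max u v - min u v = |v - u| := max_sub_min_eq_abs u v
    have hdist : dist (g • a) (g • b) = |u - v| := by rw [Subtype.dist_eq, Real.dist_eq]
    have hgap : min u v + 2 / (n : ℝ) < max u v := by
      have h1 : c < |u - v| := by rwa [hdist] at hg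
      have h2 : |u - v| = |v - u| := abs_sub_comm u v
      linarith
    have hm0 : (0 : ℝ) ≤ min u v := le_min (g • a).2.1 (g • b).2.1
    have hM1 : max u v ≤ 1 := max_le (g • a).2.2 (g • b).2.2
    obtain ⟨k, hkn, hk1, hk2⟩ := exists_cell hn hm0 hgap hM1
    refine ⟨g, ⟨k, by omega⟩, ?_⟩
    intro x hx
    simp only [hcell_def, Set.mem_setOf_eq] at hx
    exact mem_smul_Icc g hab.le (le_trans hk1 hx.1) (le_trans hx.2 hk2)
  -- the covering relation between cells
  set Rel : Fin n → Fin n → Prop := fun i j => ∃ g : G, cell j ⊆ g • cell i with hRel_def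
  have htrans : ∀ i j k, Rel i j → Rel j k → Rel i k := by
    rintro i j k ⟨g1, h1⟩ ⟨g2, h2⟩
    refine ⟨g2 * g1, h2.trans ?_⟩
    rw [← smul_smul]
    exact Set.smul_set_mono h1
  have hsucc : ∀ i, ∃ j, Rel i j := by
    intro i
    obtain ⟨g, j, hj⟩ := EXP (lo i) (hi i) (hlohi i)
    exact ⟨j, g, by rw [hcell_eq i]; exact hj⟩
  obtain ⟨i0, hi00, hterm⟩ := exists_terminal hn Rel htrans hsucc
  -- the base open set and its orbit
  set O : Set unitInterval :=
    {x | ((i0 : ℕ) : ℝ) / n < (x : ℝ) ∧ (x : ℝ) < (((i0 : ℕ) : ℝ) + 1) / n} with hO_def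
  have hOopen : IsOpen O := by
    have h : O = Subtype.val ⁻¹' Set.Ioo (((i0 : ℕ) : ℝ) / n) ((((i0 : ℕ) : ℝ) + 1) / n) := rfl
    rw [h]
    exact isOpen_Ioo.preimage continuous_subtype_val
  have hOcell : O ⊆ cell i0 := fun x hx => ⟨hx.1.le, hx.2.le⟩
  have hOne : O.Nonempty := by
    have hm0 : (0 : ℝ) ≤ (((i0 : ℕ) : ℝ) / n + (((i0 : ℕ) : ℝ) + 1) / n) / 2 := by positivity
    have hm1 : (((i0 : ℕ) : ℝ) / n + (((i0 : ℕ) : ℝ) + 1) / n) / 2 ≤ 1 := by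
      have := hk1n i0
      have := hkk1 i0
      linarith
    refine ⟨⟨(((i0 : ℕ) : ℝ) / n + (((i0 : ℕ) : ℝ) + 1) / n) / 2, hm0, hm1⟩, ?_, ?_⟩
    · have := hkk1 i0; simpa using by linarith
    · have := hkk1 i0; simpa using by linarith
  set U : Set unitInterval := ⋃ g : G, g • O with hU_def
  have hUopen : IsOpen U := isOpen_iUnion fun g => hOopen.smul g
  have hOU : O ⊆ U := by
    intro x hx
    exact Set.mem_iUnion.mpr ⟨1, by rwa [one_smul]⟩
  have hUne : U.Nonempty := hOne.mono hOU
  have hUinv : ∀ (g : G), ∀ x ∈ U, g • x ∈ U := by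
    intro g x hx
    obtain ⟨h, hxh⟩ := Set.mem_iUnion.mp hx
    refine Set.mem_iUnion.mpr ⟨g * h, ?_⟩
    rw [← smul_smul]
    exact Set.smul_mem_smul_set hxh
  -- every open set meeting O contains a nondegenerate closed interval inside O
  have NBHD : ∀ V : Set unitInterval, IsOpen V → (V ∩ O).Nonempty →
      ∃ a b : unitInterval, a < b ∧ Set.Icc a b ⊆ V ∧ Set.Icc a b ⊆ O := by
    rintro V hV ⟨x, hxV, hxO⟩
    obtain ⟨ε, hε, hball⟩ := Metric.isOpen_iff.mp (hV.inter hOopen) x ⟨hxV, hxO⟩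
    have hxlo : ((i0 : ℕ) : ℝ) / n < (x : ℝ) := hxO.1
    have hxhi : (x : ℝ) < (((i0 : ℕ) : ℝ) + 1) / n := hxO.2
    set δ : ℝ := min (ε / 2) (((((i0 : ℕ) : ℝ) + 1) / n - (x : ℝ)) / 2) with hδ_def
    have hδpos : 0 < δ := lt_min (by linarith) (by linarith)
    have hδ1 : δ ≤ ε / 2 := min_le_left _ _
    have hδ2 : δ ≤ ((((i0 : ℕ) : ℝ) + 1) / n - (x : ℝ)) / 2 := min_le_right _ _
    have hb1 : (x : ℝ) + δ ≤ 1 := by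
      have := hk1n i0
      linarith
    have hb0 : (0 : ℝ) ≤ (x : ℝ) + δ := by
      have := x.2.1
      linarith
    refine ⟨x, ⟨(x : ℝ) + δ, hb0, hb1⟩, ?_, ?_, ?_⟩
    · exact Subtype.coe_lt_coe.mp (by simpa using by linarith)
    · intro y hy
      have h1 : (x : ℝ) ≤ (y : ℝ) := Subtype.coe_le_coe.mpr hy.1
      have h2 : (y : ℝ) ≤ (x : ℝ) + δ := Subtype.coe_le_coe.mpr hy.2
      have hyb : y ∈ Metric.ball x ε := by
        rw [Metric.mem_ball, Subtype.dist_eq, Real.dist_eq, abs_sub_lt_iff]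
        constructor <;> linarith
      exact (hball hyb).1
    · intro y hy
      have h1 : (x : ℝ) ≤ (y : ℝ) := Subtype.coe_le_coe.mpr hy.1
      have h2 : (y : ℝ) ≤ (x : ℝ) + δ := Subtype.coe_le_coe.mpr hy.2
      exact ⟨by linarith, by linarith⟩
  -- the core transitivity step
  have CORE : ∀ V1 V2 : Set unitInterval, IsOpen V1 → IsOpen V2 →
      (V1 ∩ U).Nonempty → (V2 ∩ U).Nonempty →
      ∃ (w : unitInterval) (g : G), w ∈ V1 ∩ U ∧ g • w ∈ V2 ∩ U := by
    rintro V1 V2 hV1 hV2 ⟨x1, hx1⟩ ⟨x2, hx2⟩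
    obtain ⟨g1, hg1⟩ := Set.mem_iUnion.mp hx1.2
    obtain ⟨g2, hg2⟩ := Set.mem_iUnion.mp hx2.2
    have h1 : ((g1⁻¹ • (V1 ∩ U)) ∩ O).Nonempty :=
      ⟨g1⁻¹ • x1, Set.smul_mem_smul_set hx1, Set.mem_smul_set_iff_inv_smul_mem.mp hg1⟩
    have h2 : ((g2⁻¹ • (V2 ∩ U)) ∩ O).Nonempty :=
      ⟨g2⁻¹ • x2, Set.smul_mem_smul_set hx2, Set.mem_smul_set_iff_inv_smul_mem.mp hg2⟩
    obtain ⟨a1, b1, hab1, hsub1, hsubO1⟩ := NBHD _ ((hV1.inter hUopen).smul g1⁻¹) h1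
    obtain ⟨a2, b2, hab2, hsub2, hsubO2⟩ := NBHD _ ((hV2.inter hUopen).smul g2⁻¹) h2
    obtain ⟨h, j, hj⟩ := EXP a2 b2 hab2
    have hrel : Rel i0 j := ⟨h, hj.trans (Set.smul_set_mono (hsubO2.trans hOcell))⟩
    obtain ⟨kk, hkk⟩ := hterm j hrel
    have hchain : cell i0 ⊆ (kk * h) • Set.Icc a2 b2 := by
      refine hkk.trans ?_
      rw [← smul_smul]
      exact Set.smul_set_mono hj
    have hz0 : a1 ∈ Set.Icc a1 b1 := ⟨le_refl _, hab1.le⟩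
    have hzO : a1 ∈ O := hsubO1 hz0
    have hz1 : a1 ∈ g1⁻¹ • (V1 ∩ U) := hsub1 hz0
    have hz2 : a1 ∈ (kk * h) • Set.Icc a2 b2 := hchain (hOcell hzO)
    obtain ⟨z2, hz2m, hz2e⟩ := Set.mem_smul_set.mp hz2
    have hz2V : g2 • z2 ∈ V2 ∩ U := Set.mem_inv_smul_set_iff.mp (hsub2 hz2m)
    refine ⟨g1 • a1, g2 * (kk * h)⁻¹ * g1⁻¹, Set.mem_inv_smul_set_iff.mp hz1, ?_⟩
    have e1 : (kk * h)⁻¹ • a1 = z2 := by rw [← hz2e, inv_smul_smul]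
    rw [smul_smul, inv_mul_cancel_right, ← smul_smul, e1]
    exact hz2V
  -- Baire category argument
  obtain ⟨B, hBc, hBne, hB⟩ := TopologicalSpace.exists_countable_basis unitInterval
  haveI := hBc.to_subtype
  set D : ↥B → Set unitInterval := fun W =>
    if ((W : Set unitInterval) ∩ U).Nonempty then
      (⋃ g : G, g⁻¹ • ((W : Set unitInterval) ∩ U)) ∪ (closure U)ᶜ
    else Set.univ
    with hD_def
  have hDopen : ∀ W, IsOpen (D W) := by
    intro W
    simp only [hD_def]
    by_cases hW : ((W : Set unitInterval) ∩ U).Nonempty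
    · rw [if_pos hW]
      exact IsOpen.union (isOpen_iUnion fun g => ((hB.isOpen W.2).inter hUopen).smul _)
        isClosed_closure.isOpen_compl
    · rw [if_neg hW]; exact isOpen_univ
  have hDdense : ∀ W, Dense (D W) := by
    intro W
    simp only [hD_def]
    by_cases hW : ((W : Set unitInterval) ∩ U).Nonempty
    · rw [if_pos hW]
      rw [dense_iff_inter_open]
      intro O' hO' hO'ne
      by_cases hOc : O' ⊆ closure U
      · have hOU' : (O' ∩ U).Nonempty := by
          obtain ⟨p, hp⟩ := hO'ne
          exact mem_closure_iff.mp (hOc hp) O' hO' hp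
        obtain ⟨w, g, hw, hgw⟩ := CORE O' (W : Set unitInterval) hO' (hB.isOpen W.2) hOU' hW
        exact ⟨w, hw.1, Or.inl (Set.mem_iUnion.mpr ⟨g, Set.mem_inv_smul_set_iff.mpr hgw⟩)⟩
      · obtain ⟨p, hp, hpc⟩ := Set.not_subset.mp hOc
        exact ⟨p, hp, Or.inr hpc⟩
    · rw [if_neg hW]; exact dense_univ
  have hDense : Dense (⋂ W, D W) := dense_iInter_of_isOpen hDopen hDdense
  obtain ⟨x, hxU, hxD⟩ := hDense.inter_open_nonempty U hUopen hUne
  refine ⟨U, hUne, hUopen, hUinv, x, hxU, ?_⟩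
  intro y hyU
  rw [mem_closure_iff]
  intro N hN hyN
  obtain ⟨W, hWB, hyW, hWN⟩ := hB.exists_subset_of_mem_open hyN hN
  have hWU : ((W : Set unitInterval) ∩ U).Nonempty := ⟨y, hyW, hyU⟩
  have hxDW : x ∈ D ⟨W, hWB⟩ := Set.mem_iInter.mp hxD ⟨W, hWB⟩
  simp only [hD_def] at hxDW
  rw [if_pos hWU] at hxDW
  rcases hxDW with hcase | hcase
  · obtain ⟨g, hg⟩ := Set.mem_iUnion.mp hcase
    have hgx : g • x ∈ (W : Set unitInterval) ∩ U := Set.mem_inv_smul_set_iff.mp hg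
    exact ⟨g • x, hWN hgx.1, MulAction.mem_orbit x g⟩
  · exact absurd (subset_closure hxU) hcase
end

section
/- Let X be a compact metric space, G a group acting continuously on X, and H a subgroup of G of finite index. If the action of G on X is expansive, then the restricted action of H on X is also expansive. -/
/-- Expansivity passes to finite-index subgroups. -/
theorem expansive_of_finiteIndex_subgroup
    (X : Type*) [MetricSpace X] [CompactSpace X]
    (G : Type*) [Group G] [MulAction G X] [ContinuousConstSMul G X]
    (H : Subgroup G) [H.FiniteIndex]
    (hexp : ∃ c > 0, ∀ x y : X, x ≠ y → ∃ g : G, c < dist (g • x) (g • y)) :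
    ∃ c > 0, ∀ x y : X, x ≠ y → ∃ h ∈ H, c < dist (h • x) (h • y) := by
  obtain ⟨c, hc, hcxy⟩ := hexp
  haveI : Finite (G ⧸ H) := H.finite_quotient_of_finiteIndex
  haveI : Fintype (G ⧸ H) := Fintype.ofFinite _
  have hδ : ∀ q : G ⧸ H, ∃ δ > 0, ∀ a b : X, dist a b < δ →
      dist (q.out • a) (q.out • b) < c := by
    intro q
    have hcont : Continuous fun x : X => q.out • x := continuous_const_smul _
    have huc := CompactSpace.uniformContinuous_of_continuous hcont
    obtain ⟨δ, hδpos, hδ⟩ := Metric.uniformContinuous_iff.1 huc c hc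
    exact ⟨δ, hδpos, fun a b hab => hδ hab⟩
  choose δ hδpos hδ using hδ
  have hne : (Finset.univ : Finset (G ⧸ H)).Nonempty := Finset.univ_nonempty
  set c' := Finset.univ.inf' hne δ with hc'def
  have hc'pos : 0 < c' := by
    rw [hc'def, Finset.lt_inf'_iff]
    exact fun q _ => hδpos q
  refine ⟨c' / 2, by linarith, ?_⟩
  intro x y hxy
  obtain ⟨g, hg⟩ := hcxy x y hxy
  set q : G ⧸ H := QuotientGroup.mk g with hq
  have hout : (QuotientGroup.mk q.out : G ⧸ H) = QuotientGroup.mk g := by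
    simp [hq]
  have hmem : q.out⁻¹ * g ∈ H := (QuotientGroup.eq ).mp hout
  refine ⟨q.out⁻¹ * g, hmem, ?_⟩
  by_contra hle
  push_neg at hle
  have hlt : dist ((q.out⁻¹ * g) • x) ((q.out⁻¹ * g) • y) < δ q := by
    have : c' ≤ δ q := Finset.inf'_le _ (Finset.mem_univ q)
    linarith
  have := hδ q _ _ hlt
  rw [smul_smul, smul_smul, mul_inv_cancel_left] at this
  linarith
end

section
/- Let G be a group acting continuously by homeomorphisms on [0,1] such that the action is expansive. Then there exist a subgroup H of G and an open interval (a,b) ⊆ [0,1] such that (a,b) is H-invariant, the restricted action of H on (a,b) is minimal, and the action of H on [a,b] is expansive. -/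
/-!
Consider the open intervals `U ⊆ (0,1)` that are blocks of the action (each translate `g • U`
equals `U` or is disjoint from it), and call such a `U` fat if it contains a ball of radius `c/2`.
Expansiveness stretches every nonempty interval block to a fat one, and pairwise disjoint fat sets
are finitely many. Order the fat blocks by "`U` lies in a translate of `V`": along a chain, the
centres of `c/2`-balls lying in some translate form nested nonempty compact sets, so Zorn's lemma
yields a minimal fat block `m`. Let `H` be its stabilizer. If the closure of an `H`-orbit in `m`
missed a point `y ∈ m`, the component of `y` in `m` minus that closure would again be a block;
stretched to a fat block it would contradict the minimality of `m`. Finally, if `g` pulls two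
points of `[a,b] = closure m` more than `c` apart, then `g • m` is one of the finitely many fat
translates `γ • m`, and uniform continuity of these finitely many `γ` shows that `γ⁻¹ g ∈ H`
pulls the two points apart by a fixed amount.
-/

open Set Metric MulAction
open scoped Pointwise unitInterval

section SubsetTranslate

variable (G : Type*) {X : Type*} [Group G] [MulAction G X]

def SubsetTranslate (U V : Set X) : Prop := ∃ g : G, U ⊆ g • V

variable {G}

theorem SubsetTranslate.refl (U : Set X) : SubsetTranslate G U U := ⟨1, by rw [one_smul]⟩

theorem SubsetTranslate.trans {U V W : Set X} (hUV : SubsetTranslate G U V)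
    (hVW : SubsetTranslate G V W) : SubsetTranslate G U W := by
  obtain ⟨g, hg⟩ := hUV
  obtain ⟨h, hh⟩ := hVW
  exact ⟨g * h, hg.trans ((smul_set_mono hh).trans_eq (smul_smul g h W))⟩

end SubsetTranslate

theorem smul_connectedComponentIn {G X : Type*} [Group G] [MulAction G X] [TopologicalSpace X]
    [ContinuousConstSMul G X] (g : G) (F : Set X) (x : X) :
    g • connectedComponentIn F x = connectedComponentIn (g • F) (g • x) := by
  by_cases hx : x ∈ F
  · exact (Homeomorph.smul g).image_connectedComponentIn hx
  · rw [connectedComponentIn_eq_empty hx, connectedComponentIn_eq_empty (by simpa using hx),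
      smul_set_empty]

namespace MulAction.IsBlock

variable {G X : Type*} [Group G] [MulAction G X] {B : Set X}

theorem inter_of_smul_eq {T : Set X} (hB : IsBlock G B)
    (hT : ∀ g ∈ stabilizer G B, g • T = T) : IsBlock G (B ∩ T) := by
  rw [isBlock_iff_smul_eq_of_nonempty] at hB ⊢
  intro g hg
  have hgB : g • B = B :=
    hB (hg.mono (inter_subset_inter (smul_set_mono inter_subset_left) inter_subset_left))
  rw [smul_set_inter, hgB, hT g hgB]

variable [TopologicalSpace X] [ContinuousConstSMul G X]

theorem interior (hB : IsBlock G B) : IsBlock G (interior B) := by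
  rw [isBlock_iff_smul_eq_of_nonempty] at hB ⊢
  intro g hg
  rw [← interior_smul,
    hB (hg.mono (inter_subset_inter (smul_set_mono interior_subset) interior_subset))]

theorem connectedComponentIn (hB : IsBlock G B) (x : X) :
    IsBlock G (connectedComponentIn B x) := by
  rw [isBlock_iff_smul_eq_of_mem]
  intro g a ha hga
  have hgB : g • B = B :=
    hB.smul_eq_of_mem (connectedComponentIn_subset _ _ ha) (connectedComponentIn_subset _ _ hga)
  rw [connectedComponentIn_eq ha, smul_connectedComponentIn, hgB,
    ← connectedComponentIn_eq (connectedComponentIn_eq ha ▸ hga)]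

end MulAction.IsBlock

section Metric

variable {X : Type*} [PseudoMetricSpace X]

theorem isClosed_setOf_ball_subset (r : ℝ) (V : Set X) : IsClosed {w | ball w r ⊆ V} := by
  have : {w | ball w r ⊆ V} = ⋂ z ∈ Vᶜ, {w | r ≤ dist z w} := by
    ext w
    simp only [mem_ofPred_eq, mem_iInter, mem_compl_iff, subset_def, mem_ball]
    exact forall_congr' fun z ↦ by rw [← not_lt, not_imp_not]
  rw [this]
  exact isClosed_biInter fun z _ ↦
    isClosed_le continuous_const (continuous_const.dist continuous_id)

variable [CompactSpace X] {r : ℝ}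

theorem Set.PairwiseDisjoint.finite_of_ball_subset {𝓕 : Set (Set X)}
    (h𝓕 : 𝓕.PairwiseDisjoint id) (hr : 0 < r) (hball : ∀ V ∈ 𝓕, ∃ w, ball w r ⊆ V) :
    𝓕.Finite := by
  obtain ⟨t, -, ht, hcover⟩ := finite_cover_balls_of_compact (isCompact_univ (X := X)) hr
  refine (ht.biUnion fun n _ ↦ Set.Subsingleton.finite (s := {V ∈ 𝓕 | n ∈ V}) ?_).subset ?_
  · exact fun V hV W hW ↦ h𝓕.elim hV.1 hW.1 (not_disjoint_iff.2 ⟨n, hV.2, hW.2⟩)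
  · intro V hV
    obtain ⟨w, hw⟩ := hball V hV
    obtain ⟨n, hn, hwn⟩ := mem_iUnion₂.1 (hcover (mem_univ w))
    exact mem_biUnion hn ⟨hV, hw (mem_ball_comm.1 hwn)⟩

variable {G : Type*} [Group G] [MulAction G X] {B : Set X}

theorem MulAction.IsBlock.finite_smul_ball_subset (hB : IsBlock G B) (hr : 0 < r) :
    {V ∈ range (· • B : G → Set X) | ∃ w, ball w r ⊆ V}.Finite :=
  (hB.pairwiseDisjoint_range_smul.subset (sep_subset _ _)).finite_of_ball_subset hr
    fun _ hV ↦ hV.2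

theorem MulAction.IsBlock.isClosed_setOf_ball_subsetTranslate (hB : IsBlock G B) (hr : 0 < r) :
    IsClosed {w | SubsetTranslate G (ball w r) B} := by
  have : {w | SubsetTranslate G (ball w r) B} =
      ⋃ V ∈ {V ∈ range (· • B : G → Set X) | ∃ w, ball w r ⊆ V}, {w | ball w r ⊆ V} := by
    ext w
    simp only [SubsetTranslate, mem_iUnion, mem_ofPred_eq, exists_prop]
    exact ⟨fun ⟨g, hg⟩ ↦ ⟨_, ⟨⟨g, rfl⟩, w, hg⟩, hg⟩, fun ⟨_, ⟨⟨g, rfl⟩, _⟩, hg⟩ ↦ ⟨g, hg⟩⟩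
  rw [this]
  exact (hB.finite_smul_ball_subset hr).isClosed_biUnion fun V _ ↦ isClosed_setOf_ball_subset r V

theorem exists_expansive_stabilizer [ContinuousConstSMul G X] {c : ℝ} (hc : 0 < c)
    (hexp : ∀ x y : X, x ≠ y → ∃ g : G, c < dist (g • x) (g • y)) {S : Set X}
    {𝓕 : Set (Set X)} (h𝓕 : 𝓕.Finite) (h𝓕B : 𝓕 ⊆ range (· • B : G → Set X))
    (hS : ∀ x ∈ S, ∀ y ∈ S, ∀ g : G, c < dist (g • x) (g • y) → g • B ∈ 𝓕) :
    ∃ c' > 0, ∀ x ∈ S, ∀ y ∈ S, x ≠ y → ∃ h ∈ stabilizer G B, c' < dist (h • x) (h • y) := by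
  obtain ⟨Γ, -, hΓ, hΓ𝓕⟩ := (exists_subset_image_finite_and (p := (· = 𝓕))).1
    ⟨𝓕, image_univ ▸ h𝓕B, h𝓕, rfl⟩
  have : Finite Γ := hΓ.to_subtype
  have hequi : UniformEquicontinuous fun γ : Γ ↦ (γ.1 • · : X → X) :=
    uniformEquicontinuous_finite.2 fun γ ↦
      CompactSpace.uniformContinuous_of_continuous (continuous_const_smul _)
  obtain ⟨δ, hδ, hδc⟩ := Metric.uniformEquicontinuous_iff.1 hequi c hc
  refine ⟨δ / 2, half_pos hδ, fun x hx y hy hxy ↦ ?_⟩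
  obtain ⟨g, hg⟩ := hexp x y hxy
  obtain ⟨γ, hγΓ, hγ⟩ : g • B ∈ (· • B) '' Γ := hΓ𝓕 ▸ hS x hx y hy g hg
  refine ⟨γ⁻¹ * g, by rw [mem_stabilizer_iff, mul_smul, ← hγ, inv_smul_smul], ?_⟩
  by_contra! hsmall
  have := hδc _ _ (hsmall.trans_lt (half_lt_self hδ)) ⟨γ, hγΓ⟩
  rw [smul_smul, smul_smul, mul_inv_cancel_left] at this
  exact lt_asymm this hg

end Metric

theorem IsOpen.exists_mem_ne {X : Type*} [TopologicalSpace X] [PreconnectedSpace X] [T1Space X]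
    [Nontrivial X] {U : Set X} (hU : IsOpen U) {x : X} (hx : x ∈ U) : ∃ y ∈ U, y ≠ x := by
  by_contra! h
  have hUx : U = {x} := Subset.antisymm h (singleton_subset_iff.2 hx)
  obtain ⟨y, hy⟩ := exists_ne x
  have hU_univ := (isClopen_iff.1 ⟨hUx ▸ isClosed_singleton, hU⟩).resolve_left
    (nonempty_iff_ne_empty.1 ⟨x, hx⟩)
  exact hy (h y (hU_univ ▸ mem_univ y))

namespace unitInterval

instance : LocallyConnectedSpace I :=
  have := (convex_Icc (0 : ℝ) 1).locallyPathConnectedSpace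
  inferInstance

theorem smul_mem_Ioo_zero_one {G : Type*} [Group G] [MulAction G I] [ContinuousConstSMul G I]
    (g : G) {x : I} (hx : x ∈ Ioo 0 1) : g • x ∈ Ioo 0 1 := by
  rcases (continuous_const_smul g).strictMono_of_inj_boundedOrder'
    (MulAction.injective (β := I) g) with hg | hg
  · exact ⟨nonneg'.trans_lt (hg hx.1), (hg hx.2).trans_le le_one'⟩
  · exact ⟨nonneg'.trans_lt (hg hx.2), (hg hx.1).trans_le le_one'⟩

theorem exists_ball_subset_of_mem_closure {S : Set I} (hS : IsPreconnected S) {x y : I}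
    (hx : x ∈ closure S) (hy : y ∈ closure S) {c : ℝ} (hxy : c < dist x y) :
    ∃ w, ball w (c / 2) ⊆ S := by
  wlog hle : x ≤ y generalizing x y
  · exact this hy hx (dist_comm x y ▸ hxy) (le_of_not_ge hle)
  rw [Subtype.dist_eq, Real.dist_eq, abs_sub_comm,
    abs_of_nonneg (sub_nonneg.2 (Subtype.coe_le_coe.2 hle))] at hxy
  obtain ⟨x', hx'S, hxx'⟩ := Metric.mem_closure_iff.1 hx (((y : ℝ) - x - c) / 2) (by linarith)
  obtain ⟨y', hy'S, hyy'⟩ := Metric.mem_closure_iff.1 hy (((y : ℝ) - x - c) / 2) (by linarith)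
  rw [Subtype.dist_eq, Real.dist_eq, abs_lt] at hxx' hyy'
  refine ⟨⟨((x : ℝ) + y) / 2, by constructor <;> linarith [x.2.1, y.2.1, x.2.2, y.2.2]⟩,
    fun z hz ↦ hS.Icc_subset hx'S hy'S ⟨?_, ?_⟩⟩
  all_goals
    simp only [mem_ball, Subtype.dist_eq, Real.dist_eq, abs_lt] at hz
    simp only [← Subtype.coe_le_coe]
    linarith

theorem eq_Ioo_sInf_sSup {S : Set I} (hS : IsOpen S) (hSc : IsConnected S)
    (hS01 : S ⊆ Ioo 0 1) : S = Ioo (sInf S) (sSup S) := by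
  refine Subset.antisymm (fun x hx ↦ ⟨?_, ?_⟩)
    (hSc.Ioo_csInf_csSup_subset (OrderBot.bddBelow S) (OrderTop.bddAbove S))
  · obtain ⟨l, hl, hlS⟩ := exists_Ioc_subset_of_mem_nhds (hS.mem_nhds hx) ⟨0, (hS01 hx).1⟩
    obtain ⟨z, hlz, hzx⟩ := exists_between hl
    exact (csInf_le (OrderBot.bddBelow S) (hlS ⟨hlz, hzx.le⟩)).trans_lt hzx
  · obtain ⟨u, hu, huS⟩ := exists_Ico_subset_of_mem_nhds (hS.mem_nhds hx) ⟨1, (hS01 hx).2⟩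
    obtain ⟨z, hxz, hzu⟩ := exists_between hu
    exact hxz.trans_le (le_csSup (OrderTop.bddAbove S) (huS ⟨hxz.le, hzu⟩))

variable {G : Type*} [Group G] [MulAction G I] [ContinuousConstSMul G I]

-- The open preconnected subsets of `(0,1)` are exactly its open intervals (`eq_Ioo_sInf_sSup`).
variable (G) in
structure IsIntervalBlock (U : Set I) : Prop where
  isOpen : IsOpen U
  isPreconnected : IsPreconnected U
  subset_Ioo : U ⊆ Ioo 0 1
  isBlock : IsBlock G U

variable (G) in
structure IsFatIntervalBlock (r : ℝ) (U : Set I) : Prop extends IsIntervalBlock G U where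
  exists_ball_subset : ∃ w, ball w r ⊆ U

theorem IsIntervalBlock.smul {U : Set I} (hU : IsIntervalBlock G U) (g : G) :
    IsIntervalBlock G (g • U) where
  isOpen := hU.isOpen.smul g
  isPreconnected := by
    simpa only [← image_smul] using
      hU.isPreconnected.image _ (continuous_const_smul g).continuousOn
  subset_Ioo := by
    rintro _ ⟨x, hx, rfl⟩
    exact smul_mem_Ioo_zero_one g (hU.subset_Ioo hx)
  isBlock := hU.isBlock.translate g

theorem isIntervalBlock_Ioo : IsIntervalBlock G (Ioo (0 : I) 1) where
  isOpen := isOpen_Ioo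
  isPreconnected := isPreconnected_Ioo
  subset_Ioo := subset_rfl
  isBlock := IsInvariantBlock.isBlock fun g ↦ by
    rintro _ ⟨x, hx, rfl⟩
    exact smul_mem_Ioo_zero_one g hx

theorem isIntervalBlock_connectedComponentIn {F : Set I} (hF : IsOpen F) (hF01 : F ⊆ Ioo 0 1)
    (hFB : IsBlock G F) (x : I) : IsIntervalBlock G (connectedComponentIn F x) where
  isOpen := hF.connectedComponentIn
  isPreconnected := isPreconnected_connectedComponentIn
  subset_Ioo := (connectedComponentIn_subset F x).trans hF01
  isBlock := hFB.connectedComponentIn x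

theorem exists_isFatIntervalBlock_smul {c : ℝ}
    (hexp : ∀ x y : I, x ≠ y → ∃ g : G, c < dist (g • x) (g • y)) {V : Set I}
    (hV : IsIntervalBlock G V) (hne : V.Nonempty) :
    ∃ g : G, IsFatIntervalBlock G (c / 2) (g • V) := by
  obtain ⟨x, hx⟩ := hne
  obtain ⟨y, hy, hyx⟩ := hV.isOpen.exists_mem_ne hx
  obtain ⟨g, hg⟩ := hexp x y hyx.symm
  exact ⟨g, hV.smul g, exists_ball_subset_of_mem_closure (hV.smul g).isPreconnected
    (subset_closure (smul_mem_smul_set hx)) (subset_closure (smul_mem_smul_set hy)) hg⟩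

theorem exists_isIntervalBlock_subsetTranslate_of_total {ι : Type*} [Nonempty ι] {r : ℝ}
    (hr : 0 < r) {U : ι → Set I} (hU : ∀ i, IsFatIntervalBlock G r (U i))
    (htotal : ∀ i j, SubsetTranslate G (U i) (U j) ∨ SubsetTranslate G (U j) (U i)) :
    ∃ L, IsIntervalBlock G L ∧ L.Nonempty ∧ ∀ i, SubsetTranslate G L (U i) := by
  set Y : ι → Set I := fun i ↦ {w | SubsetTranslate G (ball w r) (U i)}
  have hY_mono (i j : ι) (hij : SubsetTranslate G (U i) (U j)) : Y i ⊆ Y j :=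
    fun _ hw ↦ SubsetTranslate.trans hw hij
  have hY_closed (i : ι) : IsClosed (Y i) :=
    (hU i).isBlock.isClosed_setOf_ball_subsetTranslate hr
  obtain ⟨w, hw⟩ := IsCompact.nonempty_iInter_of_directed_nonempty_isCompact_isClosed Y
    (fun i j ↦ (htotal i j).elim (fun h ↦ ⟨i, subset_rfl, hY_mono i j h⟩)
      fun h ↦ ⟨j, hY_mono j i h, subset_rfl⟩)
    (fun i ↦ (hU i).exists_ball_subset.imp fun w hw ↦ ⟨1, by rwa [one_smul]⟩)
    (fun i ↦ (hY_closed i).isCompact) hY_closed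
  choose g hg using mem_iInter.1 hw
  set F := interior (⋂ i, g i • U i)
  have hwF : ball w r ⊆ F := interior_maximal (subset_iInter hg) isOpen_ball
  have hF01 : F ⊆ Ioo 0 1 := interior_subset.trans <|
    (iInter_subset _ (Classical.arbitrary ι)).trans ((hU _).smul _).subset_Ioo
  have hFB : IsBlock G F := (IsBlock.iInter fun i ↦ (hU i).isBlock.translate (g i)).interior
  refine ⟨connectedComponentIn F w, isIntervalBlock_connectedComponentIn isOpen_interior hF01 hFB w,
    ⟨w, mem_connectedComponentIn (hwF (mem_ball_self hr))⟩, fun i ↦ ⟨g i, ?_⟩⟩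
  exact (connectedComponentIn_subset _ _).trans (interior_subset.trans (iInter_subset _ i))

theorem exists_minimal_isFatIntervalBlock {c : ℝ} (hc : 0 < c)
    (hexp : ∀ x y : I, x ≠ y → ∃ g : G, c < dist (g • x) (g • y)) :
    ∃ m, IsFatIntervalBlock G (c / 2) m ∧ ∀ U, IsFatIntervalBlock G (c / 2) U →
      SubsetTranslate G U m → SubsetTranslate G m U := by
  obtain ⟨g₀, hg₀⟩ := exists_isFatIntervalBlock_smul hexp isIntervalBlock_Ioo
    (nonempty_Ioo.2 zero_lt_one)
  have hchain (𝒞 : Set {U : Set I // IsFatIntervalBlock G (c / 2) U})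
      (h𝒞 : IsChain (fun U V ↦ SubsetTranslate G V.1 U.1) 𝒞) :
      ∃ L : {U : Set I // IsFatIntervalBlock G (c / 2) U}, ∀ U ∈ 𝒞,
        SubsetTranslate G L.1 U.1 := by
    rcases 𝒞.eq_empty_or_nonempty with rfl | ⟨U₀, hU₀⟩
    · exact ⟨⟨_, hg₀⟩, by simp⟩
    have : Nonempty 𝒞 := ⟨⟨U₀, hU₀⟩⟩
    obtain ⟨L, hL, hLne, hLU⟩ := exists_isIntervalBlock_subsetTranslate_of_total (half_pos hc)
      (U := fun U : 𝒞 ↦ U.1.1) (fun U ↦ U.1.2) fun U V ↦ by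
        by_cases hUV : U = V
        · exact Or.inl (hUV ▸ SubsetTranslate.refl _)
        · exact (h𝒞 U.2 V.2 fun h ↦ hUV (Subtype.ext h)).symm
    obtain ⟨g, hg⟩ := exists_isFatIntervalBlock_smul hexp hL hLne
    exact ⟨⟨g • L, hg⟩, fun U hU ↦ SubsetTranslate.trans ⟨g, subset_rfl⟩ (hLU ⟨U, hU⟩)⟩
  obtain ⟨⟨m, hm⟩, hmin⟩ := exists_maximal_of_chains_bounded hchain fun hUV hVW ↦ hVW.trans hUV
  exact ⟨m, hm, fun U hU hUm ↦ hmin ⟨U, hU⟩ hUm⟩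

theorem mem_closure_orbit_stabilizer {c : ℝ}
    (hexp : ∀ x y : I, x ≠ y → ∃ g : G, c < dist (g • x) (g • y)) {m : Set I}
    (hm : IsIntervalBlock G m) (hmin : ∀ U, IsFatIntervalBlock G (c / 2) U →
      SubsetTranslate G U m → SubsetTranslate G m U) {x y : I} (hx : x ∈ m) (hy : y ∈ m) :
    y ∈ closure (orbit (stabilizer G m) x) := by
  by_contra hyO
  set F := m ∩ (closure (orbit (stabilizer G m) x))ᶜ
  have hFB : IsBlock G F := hm.isBlock.inter_of_smul_eq fun g hg ↦ by
    rw [smul_set_compl, ← closure_smul]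
    exact congrArg (fun s ↦ (closure s)ᶜ) (smul_orbit (⟨g, hg⟩ : stabilizer G m) x)
  set V := connectedComponentIn F y
  have hV : IsIntervalBlock G V := isIntervalBlock_connectedComponentIn
    (hm.isOpen.inter isClosed_closure.isOpen_compl) (inter_subset_left.trans hm.subset_Ioo) hFB y
  have hyV : y ∈ V := mem_connectedComponentIn ⟨hy, hyO⟩
  have hVm : V ⊆ m := (connectedComponentIn_subset _ _).trans inter_subset_left
  obtain ⟨g, hg⟩ := exists_isFatIntervalBlock_smul hexp hV ⟨y, hyV⟩
  obtain ⟨f, hf⟩ := hmin _ hg ⟨g, smul_set_mono hVm⟩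
  rw [smul_smul] at hf
  have hfix : (f * g) • V = V := hV.isBlock.smul_eq_of_nonempty ⟨y, hf (hVm hyV), hyV⟩
  have hmF : m ⊆ F := (hf.trans hfix.subset).trans (connectedComponentIn_subset _ _)
  exact (hmF hx).2 (subset_closure (mem_orbit_self x))

theorem exists_expansive_stabilizer_on_closure {c : ℝ} (hc : 0 < c)
    (hexp : ∀ x y : I, x ≠ y → ∃ g : G, c < dist (g • x) (g • y)) {m : Set I}
    (hm : IsIntervalBlock G m) :
    ∃ c' > 0, ∀ x ∈ closure m, ∀ y ∈ closure m, x ≠ y →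
      ∃ h ∈ stabilizer G m, c' < dist (h • x) (h • y) :=
  exists_expansive_stabilizer hc hexp (hm.isBlock.finite_smul_ball_subset (half_pos hc))
    (sep_subset _ _) fun x hx y hy g hg ↦
      ⟨⟨g, rfl⟩, exists_ball_subset_of_mem_closure (hm.smul g).isPreconnected
        (by rw [closure_smul]; exact smul_mem_smul_set hx)
        (by rw [closure_smul]; exact smul_mem_smul_set hy) hg⟩

end unitInterval

open unitInterval in
/-- For an expansive action on [0,1] there are a subgroup H and an H-invariant open interval
(a,b) on which H acts minimally, with the action of H on [a,b] expansive. -/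
theorem expansive_action_has_minimal_open_interval
    (G : Type*) [Group G] [MulAction G unitInterval] [ContinuousConstSMul G unitInterval]
    (hexp : ∃ c > 0, ∀ x y : unitInterval, x ≠ y → ∃ g : G, c < dist (g • x) (g • y)) :
    ∃ (H : Subgroup G) (a b : ℝ), 0 ≤ a ∧ a < b ∧ b ≤ 1 ∧
      (∀ h ∈ H, ∀ x : unitInterval, a < (x : ℝ) ∧ (x : ℝ) < b →
        a < ((h • x : unitInterval) : ℝ) ∧ ((h • x : unitInterval) : ℝ) < b) ∧
      (∀ x : unitInterval, a < (x : ℝ) ∧ (x : ℝ) < b →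
        ∀ y : unitInterval, a < (y : ℝ) ∧ (y : ℝ) < b →
          y ∈ closure {z : unitInterval | ∃ h ∈ H, h • x = z}) ∧
      (∃ c > 0, ∀ x y : unitInterval, a ≤ (x : ℝ) ∧ (x : ℝ) ≤ b →
        a ≤ (y : ℝ) ∧ (y : ℝ) ≤ b → x ≠ y → ∃ h ∈ H, c < dist (h • x) (h • y)) := by
  obtain ⟨c, hc, hexp⟩ := hexp
  obtain ⟨m, hm, hmin⟩ := exists_minimal_isFatIntervalBlock hc hexp
  obtain ⟨c', hc', hexp'⟩ := exists_expansive_stabilizer_on_closure hc hexp hm.toIsIntervalBlock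
  have hmne : m.Nonempty := hm.exists_ball_subset.imp fun w hw ↦ hw (mem_ball_self (half_pos hc))
  obtain ⟨p, q, hm_eq⟩ : ∃ p q : I, m = Ioo p q :=
    ⟨_, _, eq_Ioo_sInf_sSup hm.isOpen ⟨hmne, hm.isPreconnected⟩ hm.subset_Ioo⟩
  have hpq : p < q := nonempty_Ioo.1 (hm_eq ▸ hmne)
  have hmem (x : I) : x ∈ m ↔ (p : ℝ) < x ∧ (x : ℝ) < q := by
    rw [hm_eq]; exact Iff.rfl
  have hmem_closure (x : I) : x ∈ closure m ↔ (p : ℝ) ≤ x ∧ (x : ℝ) ≤ q := by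
    rw [hm_eq, closure_Ioo hpq.ne]; exact Iff.rfl
  refine ⟨stabilizer G m, p, q, p.2.1, hpq, q.2.2, ?_, ?_, ?_⟩
  · intro h hh x hx
    rw [← hmem] at hx ⊢
    exact mem_stabilizer_iff.1 hh ▸ smul_mem_smul_set hx
  · intro x hx y hy
    convert mem_closure_orbit_stabilizer hexp hm.toIsIntervalBlock hmin
      ((hmem x).2 hx) ((hmem y).2 hy)
    ext z
    simp [mem_orbit_iff]
  · exact ⟨c', hc', fun x y hx hy ↦ hexp' x ((hmem_closure x).2 hx) y ((hmem_closure y).2 hy)⟩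
end

section
/- A solvable group G is polycyclic if and only if every subgroup of G is finitely generated. -/
/-!
A polycyclic series is a chain of "cyclic steps" `A ⊳ B` with `A ⧸ B` cyclic, running from `⊤`
to `⊥`. Intersecting a subgroup `H` with such a chain exhibits `H` as an iterated extension of
subgroups of cyclic groups, and extensions of finitely generated groups are finitely generated.
Conversely, if every subgroup is finitely generated then each factor `D i ⧸ D (i + 1)` of the
derived series is a finitely generated abelian group; adjoining its generators to `D (i + 1)` one
at a time refines it into cyclic steps, and solvability makes the derived series reach `⊥`.
-/

def IsPolycyclic (G : Type*) [Group G] : Prop :=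
  ∃ (n : ℕ) (N : ℕ → Subgroup G), N 0 = ⊤ ∧ N (n + 1) = ⊥ ∧
    ∀ i ≤ n, N (i + 1) ≤ N i ∧
      (∀ x ∈ N i, ∀ y ∈ N (i + 1), x * y * x⁻¹ ∈ N (i + 1)) ∧
      ∃ g ∈ N i, ∀ x ∈ N i, ∃ m : ℤ, x * (g ^ m)⁻¹ ∈ N (i + 1)

namespace Subgroup

variable {G Q : Type*} [Group G] [Group Q]

theorem fg_subgroupOf_iff {H K : Subgroup G} (h : H ≤ K) : (H.subgroupOf K).FG ↔ H.FG := by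
  rw [← Group.fg_iff_subgroup_fg, ← Group.fg_iff_subgroup_fg]
  exact ⟨fun _ ↦ Group.fg_of_surjective (f := (subgroupOfEquivOfLe h).toMonoidHom)
      (subgroupOfEquivOfLe h).surjective,
    fun _ ↦ Group.fg_of_surjective (f := (subgroupOfEquivOfLe h).symm.toMonoidHom)
      (subgroupOfEquivOfLe h).symm.surjective⟩

theorem fg_of_isCyclic (H : Subgroup G) [IsCyclic H] : H.FG := by
  obtain ⟨g, hg⟩ := IsCyclic.exists_generator (α := H)
  rw [← Group.fg_iff_subgroup_fg, Group.fg_iff]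
  exact ⟨{g}, by rw [← zpowers_eq_closure, eq_top_iff']; exact hg, Set.finite_singleton g⟩

theorem fg_of_fg_map_of_fg_inf_ker (f : G →* Q) {H : Subgroup G}
    (hmap : (H.map f).FG) (hker : (H ⊓ f.ker).FG) : H.FG := by
  obtain ⟨S, hS⟩ := hker
  obtain ⟨T, hTH, hT, hTgen⟩ : ∃ T ⊆ (H : Set G), T.Finite ∧ closure (f '' T) = H.map f := by
    obtain ⟨U, hU⟩ := hmap
    refine Set.exists_subset_image_finite_and (p := fun t ↦ closure t = H.map f) |>.mp ?_
    exact ⟨U, by rw [← coe_map, ← hU]; exact subset_closure, U.finite_toSet, hU⟩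
  rw [fg_iff]
  refine ⟨S ∪ T, le_antisymm ?_ ?_, S.finite_toSet.union hT⟩
  · rw [closure_union, hS]
    exact sup_le inf_le_left ((closure_le H).mpr hTH)
  · intro x hx
    obtain ⟨y, hy, hyx⟩ : ∃ y ∈ closure T, f y = f x := by
      rw [← mem_map, MonoidHom.map_closure, hTgen]
      exact mem_map_of_mem f hx
    have hker : y⁻¹ * x ∈ closure (S : Set G) := by
      rw [hS]
      exact mem_inf.mpr ⟨mul_mem (inv_mem ((closure_le H).mpr hTH hy)) hx, by simp [hyx]⟩
    rw [closure_union]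
    simpa using mul_mem (mem_sup_right hy) (mem_sup_left hker)

end Subgroup

theorem Relation.transGen_iff_exists_nat_seq {α : Type*} {r : α → α → Prop} {a b : α} :
    Relation.TransGen r a b ↔
      ∃ (n : ℕ) (f : ℕ → α), f 0 = a ∧ f (n + 1) = b ∧ ∀ i ≤ n, r (f i) (f (i + 1)) := by
  constructor
  · intro h
    induction h with
    | @single b hab => exact ⟨0, fun i ↦ if i = 0 then a else b, rfl, rfl, by simpa using hab⟩
    | @tail _ c _ hbc ih =>
      obtain ⟨n, f, hf0, hfn, hf⟩ := ih
      refine ⟨n + 1, fun i ↦ if i ≤ n + 1 then f i else c, by simp [hf0], by simp, ?_⟩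
      intro i hi
      rcases Nat.lt_or_eq_of_le hi with hi | rfl
      · simpa [show i ≤ n + 1 by omega, show i + 1 ≤ n + 1 by omega] using hf i (by omega)
      · simpa [hfn] using hbc
  · rintro ⟨n, f, rfl, rfl, hf⟩
    induction n with
    | zero => exact .single (hf 0 le_rfl)
    | succ n ih => exact .tail (ih fun i hi ↦ hf i (by omega)) (hf (n + 1) le_rfl)

section CyclicStep

variable {G : Type*} [Group G]

open Subgroup

/-- `B` is normal in `A` with `A ⧸ B` cyclic, stated elementwise as in `IsPolycyclic` since `B`
need not be normal in `G`. -/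
def IsCyclicStep (A B : Subgroup G) : Prop :=
  B ≤ A ∧ (∀ x ∈ A, ∀ y ∈ B, x * y * x⁻¹ ∈ B) ∧ ∃ g ∈ A, ∀ x ∈ A, ∃ m : ℤ, x * (g ^ m)⁻¹ ∈ B

instance : Std.Refl (IsCyclicStep (G := G)) where
  refl A := ⟨le_rfl, fun _ hx _ hy ↦ mul_mem (mul_mem hx hy) (inv_mem hx),
    1, one_mem A, fun x hx ↦ ⟨0, by simpa using hx⟩⟩

theorem isPolycyclic_iff_reflTransGen :
    IsPolycyclic G ↔ Relation.ReflTransGen IsCyclicStep (⊤ : Subgroup G) ⊥ := by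
  rw [Relation.reflTransGen_eq_transGen, Relation.transGen_iff_exists_nat_seq]
  rfl

theorem IsCyclicStep.fg_inf_of_fg_inf {A B : Subgroup G} (h : IsCyclicStep A B) {H : Subgroup G}
    (hB : (H ⊓ B).FG) : (H ⊓ A).FG := by
  obtain ⟨hBA, hconj, g, hg, hgen⟩ := h
  have : (B.subgroupOf A).Normal := ⟨fun y hy x ↦ hconj x x.2 y hy⟩
  have : IsCyclic (A ⧸ B.subgroupOf A) := by
    refine ⟨⟨QuotientGroup.mk ⟨g, hg⟩, ?_⟩⟩
    rintro ⟨x⟩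
    obtain ⟨m, hm⟩ := hgen x x.2
    have hm' : x / ⟨g, hg⟩ ^ m ∈ B.subgroupOf A := by
      simpa [div_eq_mul_inv, mem_subgroupOf] using hm
    exact ⟨m, (QuotientGroup.eq_iff_div_mem.mpr hm').symm⟩
  rw [← fg_subgroupOf_iff inf_le_right, inf_subgroupOf_right]
  refine fg_of_fg_map_of_fg_inf_ker (QuotientGroup.mk' (B.subgroupOf A)) (fg_of_isCyclic _) ?_
  rw [QuotientGroup.ker_mk', subgroupOf, subgroupOf, ← comap_inf]
  exact (fg_subgroupOf_iff (inf_le_right.trans hBA)).mpr hB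

theorem fg_inf_of_reflTransGen {A : Subgroup G} (h : Relation.ReflTransGen IsCyclicStep A ⊥)
    (H : Subgroup G) : (H ⊓ A).FG := by
  induction h using Relation.ReflTransGen.head_induction_on with
  | refl => exact ⟨∅, by simp⟩
  | head hstep _ ih => exact hstep.fg_inf_of_fg_inf ih

theorem isCyclicStep_sup_zpowers {C : Subgroup G} {g : G}
    (h : C ⊔ zpowers g ≤ normalizer (C : Set G)) :
    IsCyclicStep (C ⊔ zpowers g) C := by
  refine ⟨le_sup_left, fun x hx y hy ↦ (mem_normalizer_iff.mp (h hx) y).mp hy,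
    g, mem_sup_right (mem_zpowers g), fun x hx ↦ ?_⟩
  rw [← SetLike.mem_coe, coe_mul_of_right_le_normalizer_left C _ (le_sup_right.trans h)] at hx
  obtain ⟨c, hc, _, ⟨m, rfl⟩, rfl⟩ := hx
  exact ⟨m, by simpa using hc⟩

theorem reflTransGen_isCyclicStep_of_commutator_le {A C : Subgroup G} (hCA : C ≤ A)
    (hAC : ⁅A, A⁆ ≤ C) (hA : A.FG) : Relation.ReflTransGen IsCyclicStep A C := by
  classical
  obtain ⟨S, hS⟩ := hA
  suffices ∀ T : Finset G, (T : Set G) ⊆ A →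
      Relation.ReflTransGen IsCyclicStep (C ⊔ closure T) C by
    simpa [hS, hCA] using this S (hS ▸ subset_closure)
  intro T
  induction T using Finset.induction_on with
  | empty => simpa using .refl
  | insert g T _ ih =>
    intro hT
    rw [Finset.coe_insert, Set.insert_subset_iff] at hT
    have hle : C ⊔ closure T ⊔ zpowers g ≤ A :=
      sup_le (sup_le hCA ((closure_le A).mpr hT.2)) (zpowers_le.mpr hT.1)
    have hstep : IsCyclicStep (C ⊔ closure T ⊔ zpowers g) (C ⊔ closure T) :=
      isCyclicStep_sup_zpowers <| le_normalizer_iff_commutator_le_right.mpr <|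
        (commutator_mono hle (le_sup_left.trans hle)).trans (hAC.trans le_sup_left)
    rw [Finset.coe_insert, ← Set.singleton_union, Subgroup.closure_union, ← zpowers_eq_closure,
      sup_comm (zpowers g), ← sup_assoc]
    exact .head hstep (ih hT.2)

theorem reflTransGen_isCyclicStep_derivedSeries (hfg : ∀ H : Subgroup G, H.FG) (n : ℕ) :
    Relation.ReflTransGen IsCyclicStep ⊤ (derivedSeries G n) := by
  induction n with
  | zero => exact .refl
  | succ n ih =>
    refine ih.trans (reflTransGen_isCyclicStep_of_commutator_le ?_ le_rfl (hfg _))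
    exact derivedSeries_succ G n ▸ commutator_le_self _

end CyclicStep

/-- A solvable group is polycyclic iff every subgroup is finitely generated. -/
theorem solvable_polycyclic_iff_subgroups_fg
    (G : Type*) [Group G] (hs : IsSolvable G) :
    IsPolycyclic G ↔ ∀ H : Subgroup G, H.FG := by
  rw [isPolycyclic_iff_reflTransGen]
  refine ⟨fun h H ↦ by simpa using fg_inf_of_reflTransGen h H, fun hfg ↦ ?_⟩
  obtain ⟨n, hn⟩ := hs.solvable
  exact hn ▸ reflTransGen_isCyclicStep_derivedSeries hfg n
end
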